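/- A class D in ℤ^{r+1} is a ruling (i.e., (D,D) = 0 and (D,-K) = 2) if and only if D can be written as E + F for exceptional classes E, F with (E,F) = 1. -/
import Mathlib


/-- The Del Pezzo intersection form on `ℤ^{r+1}`: `(l_0,l_0)=1`, `(l_i,l_i)=-1` for `i ≥ 1`,
`(l_i,l_j)=0` for `i ≠ j`. -/
def dpB {r : ℕ} (x y : Fin (r + 1) → ℤ) : ℤ :=
  x 0 * y 0 - ∑ i : Fin r, x i.succ * y i.succ

/-- The anticanonical class `-K = 3 l_0 - l_1 - ⋯ - l_r`. -/
def negK {r : ℕ} : Fin (r + 1) → ℤ := fun i => if i = 0 then 3 else -1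

/-- The standard basis vector `l_i`. -/
def l {r : ℕ} (i : Fin (r + 1)) : Fin (r + 1) → ℤ := fun j => if j = i then 1 else 0

/-- An exceptional class: `(E,E) = -1` and `(E,-K) = 1`. -/
def IsExc {r : ℕ} (E : Fin (r + 1) → ℤ) : Prop := dpB E E = -1 ∧ dpB E negK = 1

/-- A root: `(α,α) = -2` and `(α,-K) = 0`. -/
def IsRoot {r : ℕ} (a : Fin (r + 1) → ℤ) : Prop := dpB a a = -2 ∧ dpB a negK = 0

/-- A ruling: `(D,D) = 0` and `(D,-K) = 2`. -/
def IsRuling {r : ℕ} (D : Fin (r + 1) → ℤ) : Prop := dpB D D = 0 ∧ dpB D negK = 2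

/-- The reflection `σ_α(x) = x + (x,α) α`. -/
def reflct {r : ℕ} (a x : Fin (r + 1) → ℤ) : Fin (r + 1) → ℤ :=
  fun i => x i + dpB x a * a i

section Aux

variable {r : ℕ}

lemma dpB_comm (x y : Fin (r+1) → ℤ) : dpB x y = dpB y x := by
  simp [dpB, mul_comm]

lemma dpB_add_left (x y z : Fin (r+1) → ℤ) : dpB (x + y) z = dpB x z + dpB y z := by
  simp [dpB, Pi.add_apply, add_mul, Finset.sum_add_distrib]; ring

lemma dpB_add_right (x y z : Fin (r+1) → ℤ) : dpB z (x + y) = dpB z x + dpB z y := by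
  rw [dpB_comm, dpB_add_left, dpB_comm x z, dpB_comm y z]

lemma dpB_reflct_left (a x z : Fin (r+1) → ℤ) :
    dpB (reflct a x) z = dpB x z + dpB x a * dpB a z := by
  simp only [reflct, dpB, add_mul, Finset.sum_add_distrib, mul_assoc, ← Finset.mul_sum]
  ring

lemma dpB_reflct_right (a x z : Fin (r+1) → ℤ) :
    dpB z (reflct a x) = dpB z x + dpB x a * dpB z a := by
  rw [dpB_comm, dpB_reflct_left, dpB_comm z x, dpB_comm z a]

lemma dpB_negK_right (x : Fin (r+1) → ℤ) : dpB x negK = 3 * x 0 + ∑ i : Fin r, x i.succ := by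
  simp [dpB, negK, Fin.succ_ne_zero]
  ring

lemma dpB_reflct_reflct {a : Fin (r+1) → ℤ} (ha : dpB a a = -2) (x y : Fin (r+1) → ℤ) :
    dpB (reflct a x) (reflct a y) = dpB x y := by
  rw [dpB_reflct_left, dpB_reflct_right, dpB_reflct_right, ha, dpB_comm a y]
  ring

lemma reflct_negK {a : Fin (r+1) → ℤ} (ha : dpB a negK = 0) (x : Fin (r+1) → ℤ) :
    dpB (reflct a x) negK = dpB x negK := by
  rw [dpB_reflct_left, ha]; ring

lemma reflct_exc {a : Fin (r+1) → ℤ} (ha : IsRoot a) {E : Fin (r+1) → ℤ} (hE : IsExc E) :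
    IsExc (reflct a E) :=
  ⟨by rw [dpB_reflct_reflct ha.1, hE.1], by rw [reflct_negK ha.2, hE.2]⟩

lemma reflct_ruling {a : Fin (r+1) → ℤ} (ha : IsRoot a) {D : Fin (r+1) → ℤ} (hD : IsRuling D) :
    IsRuling (reflct a D) :=
  ⟨by rw [dpB_reflct_reflct ha.1, hD.1], by rw [reflct_negK ha.2, hD.2]⟩

lemma reflct_add (a x y : Fin (r+1) → ℤ) :
    reflct a (x + y) = reflct a x + reflct a y := by
  funext t
  simp [reflct, dpB_add_left, Pi.add_apply]
  ring

lemma reflct_reflct {a : Fin (r+1) → ℤ} (ha : dpB a a = -2) (x : Fin (r+1) → ℤ) :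
    reflct a (reflct a x) = x := by
  funext t
  simp [reflct, dpB_reflct_left, ha]
  ring

lemma dpB_l_succ (x : Fin (r+1) → ℤ) (p : Fin r) : dpB x (l p.succ) = - x p.succ := by
  simp [dpB, l, Fin.succ_ne_zero, (Fin.succ_ne_zero p).symm, Fin.succ_inj, mul_ite,
    Finset.sum_ite_eq', if_neg]

lemma dpB_two (x : Fin (r+1) → ℤ) (p q : Fin r) :
    dpB x (l 0 - l p.succ - l q.succ) = x 0 + x p.succ + x q.succ := by
  simp [dpB, l, Pi.sub_apply, Fin.succ_ne_zero, (Fin.succ_ne_zero p).symm,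
    (Fin.succ_ne_zero q).symm, Fin.succ_inj, mul_ite, mul_sub, Finset.sum_sub_distrib,
    Finset.sum_ite_eq']
  ring

lemma dpB_three (x : Fin (r+1) → ℤ) (p q s : Fin r) :
    dpB x (l 0 - l p.succ - l q.succ - l s.succ) = x 0 + x p.succ + x q.succ + x s.succ := by
  simp [dpB, l, Pi.sub_apply, Fin.succ_ne_zero, (Fin.succ_ne_zero p).symm,
    (Fin.succ_ne_zero q).symm, (Fin.succ_ne_zero s).symm, Fin.succ_inj, mul_ite, mul_sub,
    Finset.sum_sub_distrib, Finset.sum_ite_eq']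
  ring

lemma three_eval0 (p q s : Fin r) : ((l 0 - l p.succ - l q.succ - l s.succ : Fin (r+1) → ℤ)) 0 = 1 := by
  simp [l, Pi.sub_apply, (Fin.succ_ne_zero p).symm, (Fin.succ_ne_zero q).symm,
    (Fin.succ_ne_zero s).symm]

lemma root_three {p q s : Fin r} (hpq : p ≠ q) (hps : p ≠ s) (hqs : q ≠ s) :
    IsRoot ((l 0 - l p.succ - l q.succ - l s.succ : Fin (r+1) → ℤ)) := by
  constructor
  · rw [dpB_three]
    simp [l, Pi.sub_apply, (Fin.succ_ne_zero p).symm, (Fin.succ_ne_zero q).symm,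
      (Fin.succ_ne_zero s).symm, Fin.succ_ne_zero, Fin.succ_inj, hpq, hps, hqs,
      Ne.symm hpq, Ne.symm hps, Ne.symm hqs]
  · rw [dpB_negK_right]
    simp [l, Pi.sub_apply, (Fin.succ_ne_zero p).symm, (Fin.succ_ne_zero q).symm,
      (Fin.succ_ne_zero s).symm, Fin.succ_ne_zero, Fin.succ_inj,
      Finset.sum_sub_distrib, Finset.sum_ite_eq']

lemma ruling_coords {D : Fin (r+1) → ℤ} (hD : IsRuling D) :
    (∑ i : Fin r, D i.succ) = 2 - 3 * D 0 ∧ (∑ i : Fin r, (D i.succ)^2) = (D 0)^2 := by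
  obtain ⟨h1, h2⟩ := hD
  rw [dpB_negK_right] at h2
  constructor
  · linarith
  · have := h1
    simp only [dpB] at this
    have : (∑ i : Fin r, D i.succ * D i.succ) = D 0 * D 0 := by linarith
    calc (∑ i : Fin r, (D i.succ)^2) = ∑ i : Fin r, D i.succ * D i.succ := by
          simp [sq]
      _ = D 0 * D 0 := this
      _ = (D 0)^2 := (sq (D 0)).symm

lemma ruling_pos (h2 : r ≤ 8) {D : Fin (r+1) → ℤ} (hD : IsRuling D) : 1 ≤ D 0 := by
  obtain ⟨hs, hq⟩ := ruling_coords hD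
  have hcs : (∑ i : Fin r, D i.succ) ^ 2 ≤
      (Finset.univ.card : ℤ) * ∑ i : Fin r, (D i.succ)^2 :=
    sq_sum_le_card_mul_sum_sq
  rw [hs, hq, Finset.card_univ, Fintype.card_fin] at hcs
  have hr : (r : ℤ) ≤ 8 := by exact_mod_cast h2
  nlinarith [sq_nonneg (D 0)]

lemma ruling_coord_nonpos (h2 : r ≤ 8) {D : Fin (r+1) → ℤ} (hD : IsRuling D) (j : Fin r) :
    D j.succ ≤ 0 := by
  by_contra h
  push_neg at h
  have hd0 := ruling_pos h2 hD
  obtain ⟨hs, hq⟩ := ruling_coords hD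
  have hsplit1 : D j.succ + ∑ i ∈ Finset.univ.erase j, D i.succ = ∑ i : Fin r, D i.succ :=
    Finset.add_sum_erase _ (fun i => D i.succ) (Finset.mem_univ j)
  have hsplit2 : (D j.succ)^2 + ∑ i ∈ Finset.univ.erase j, (D i.succ)^2
      = ∑ i : Fin r, (D i.succ)^2 :=
    Finset.add_sum_erase _ (fun i => (D i.succ)^2) (Finset.mem_univ j)
  have hcs : (∑ i ∈ Finset.univ.erase j, D i.succ) ^ 2 ≤
      ((Finset.univ.erase j).card : ℤ) * ∑ i ∈ Finset.univ.erase j, (D i.succ)^2 :=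
    sq_sum_le_card_mul_sum_sq
  have hcard : ((Finset.univ.erase j).card : ℤ) ≤ 7 := by
    rw [Finset.card_erase_of_mem (Finset.mem_univ j), Finset.card_univ, Fintype.card_fin]
    have : (r:ℤ) ≤ 8 := by exact_mod_cast h2
    omega
  have hQnn : (0:ℤ) ≤ ∑ i ∈ Finset.univ.erase j, (D i.succ)^2 :=
    Finset.sum_nonneg fun i _ => sq_nonneg _
  have hcs7 : (∑ i ∈ Finset.univ.erase j, D i.succ) ^ 2 ≤
      7 * ∑ i ∈ Finset.univ.erase j, (D i.succ)^2 :=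
    hcs.trans (by nlinarith)
  nlinarith [mul_nonneg (by linarith : (0:ℤ) ≤ D 0 - 1) (by linarith : (0:ℤ) ≤ D j.succ - 1),
    sq_nonneg (2*D 0 - 3), sq_nonneg (D j.succ)]

lemma keylemma (a b c d Q T : ℤ) (hd : 2 ≤ d) (hab : b ≤ a) (hbc : c ≤ b) (hc : 0 ≤ c)
    (hS : a+b+c ≤ d) (hsum : a+b+c+T = 3*d-2) (hsq : a^2+b^2+c^2+Q = d^2)
    (hQ0 : 0 ≤ Q) (hQ : Q ≤ c*T) (_hT : 0 ≤ T) (hCS : T^2 ≤ 5*Q) : False := by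
  rcases eq_or_lt_of_le hc with hc0 | hc1
  · have hQ' : Q = 0 := le_antisymm (by rw [← hc0] at hQ; simpa using hQ) hQ0
    have hT2 : T^2 = 0 := le_antisymm (by rw [hQ'] at hCS; simpa using hCS) (sq_nonneg T)
    have hT0 : T = 0 := sq_eq_zero_iff.mp hT2
    nlinarith [sq_nonneg (a-b), mul_nonneg (by linarith : (0:ℤ) ≤ d - 2) (by linarith : (0:ℤ) ≤ d)]
  · nlinarith [mul_nonneg (by linarith : (0:ℤ) ≤ b) (by linarith : (0:ℤ) ≤ a - b),
      mul_nonneg hc (by linarith : (0:ℤ) ≤ a - c),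
      mul_nonneg (by linarith : (0:ℤ) ≤ a+b+c) (by linarith : (0:ℤ) ≤ b - c),
      mul_nonneg (by linarith : (0:ℤ) ≤ d-a-b-c) (by linarith : (0:ℤ) ≤ a+b+c+d-3*c)]

lemma ruling_base (h2 : r ≤ 8) {D : Fin (r+1) → ℤ} (hD : IsRuling D)
    (hd0 : D 0 = 1) : ∃ j : Fin r, D = l 0 - l j.succ := by
  obtain ⟨hs, _⟩ := ruling_coords hD
  rw [hd0] at hs
  have hnp := ruling_coord_nonpos h2 hD
  have hex : ∃ j : Fin r, D j.succ < 0 := by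
    by_contra h
    push_neg at h
    have : (∑ i : Fin r, D i.succ) = 0 :=
      le_antisymm (Finset.sum_nonpos fun i _ => hnp i)
        (Finset.sum_nonneg fun i _ => h i)
    omega
  obtain ⟨j, hj⟩ := hex
  have hsplit : D j.succ + ∑ i ∈ Finset.univ.erase j, D i.succ = ∑ i : Fin r, D i.succ :=
    Finset.add_sum_erase _ (fun i => D i.succ) (Finset.mem_univ j)
  have herase_np : ∑ i ∈ Finset.univ.erase j, D i.succ ≤ 0 :=
    Finset.sum_nonpos fun i _ => hnp i
  have hjval : D j.succ = -1 := by omega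
  have herase0 : ∑ i ∈ Finset.univ.erase j, D i.succ = 0 := by omega
  have hzero : ∀ i ∈ Finset.univ.erase j, D i.succ = 0 := by
    intro i hi
    exact (Finset.sum_eq_zero_iff_of_nonpos (fun i _ => hnp i)).mp herase0 i hi
  refine ⟨j, funext fun t => ?_⟩
  refine Fin.cases ?_ (fun i => ?_) t
  · simp [l, hd0, (Fin.succ_ne_zero j).symm]
  · by_cases hij : i = j
    · subst hij; simp [l, hjval, Fin.succ_ne_zero]
    · have h0 : D i.succ = 0 := hzero i (Finset.mem_erase.mpr ⟨hij, Finset.mem_univ i⟩)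
      simp [l, h0, Fin.succ_ne_zero, Fin.succ_inj, hij]

lemma base_decomp (h1 : 4 ≤ r) (h2 : r ≤ 8) {D : Fin (r+1) → ℤ} (hD : IsRuling D)
    (hd0 : D 0 = 1) :
    ∃ E F : Fin (r + 1) → ℤ, IsExc E ∧ IsExc F ∧ dpB E F = 1 ∧ D = E + F := by
  obtain ⟨j, rfl⟩ := ruling_base h2 hD hd0
  obtain ⟨k, hk⟩ : ∃ k : Fin r, k ≠ j :=
    Fintype.exists_ne_of_one_lt_card (by simp; omega) j
  refine ⟨l k.succ, l 0 - l j.succ - l k.succ, ⟨?_, ?_⟩, ⟨?_, ?_⟩, ?_, ?_⟩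
  · rw [dpB_l_succ]; simp [l]
  · rw [dpB_negK_right]
    simp [l, (Fin.succ_ne_zero k).symm, Fin.succ_inj, Finset.sum_ite_eq']
  · rw [dpB_two]
    simp [l, Pi.sub_apply, (Fin.succ_ne_zero j).symm, (Fin.succ_ne_zero k).symm,
      Fin.succ_inj, Fin.succ_ne_zero, hk, Ne.symm hk]
  · rw [dpB_negK_right]
    simp [l, Pi.sub_apply, (Fin.succ_ne_zero j).symm, (Fin.succ_ne_zero k).symm,
      Fin.succ_ne_zero, Fin.succ_inj, Finset.sum_sub_distrib, Finset.sum_ite_eq']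
  · rw [dpB_two]
    simp [l, (Fin.succ_ne_zero k).symm, Fin.succ_inj, Fin.succ_ne_zero, hk.symm, hk]
  · abel

lemma decomp_aux (h1 : 4 ≤ r) (h2 : r ≤ 8) :
    ∀ (n : ℕ) (D : Fin (r+1) → ℤ), IsRuling D → D 0 = (n : ℤ) →
      ∃ E F : Fin (r + 1) → ℤ, IsExc E ∧ IsExc F ∧ dpB E F = 1 ∧ D = E + F := by
  intro n
  induction n using Nat.strong_induction_on with
  | _ n ih =>
    intro D hD hD0
    have hpos : 1 ≤ D 0 := ruling_pos h2 hD
    by_cases hn1 : D 0 = 1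
    · exact base_decomp h1 h2 hD hn1
    · have hd2 : 2 ≤ D 0 := by omega
      obtain ⟨i, -, hi⟩ := Finset.exists_min_image (Finset.univ : Finset (Fin r))
        (fun t => D t.succ) ⟨⟨0, by omega⟩, Finset.mem_univ _⟩
      set s1 := Finset.univ.erase i with hs1def
      have hs1ne : s1.Nonempty := by
        rw [← Finset.card_pos, hs1def, Finset.card_erase_of_mem (Finset.mem_univ i),
          Finset.card_univ, Fintype.card_fin]; omega
      obtain ⟨j, hjmem, hj⟩ := Finset.exists_min_image s1 (fun t => D t.succ) hs1ne
      set s2 := s1.erase j with hs2def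
      have hs2ne : s2.Nonempty := by
        rw [← Finset.card_pos, hs2def, Finset.card_erase_of_mem hjmem, hs1def,
          Finset.card_erase_of_mem (Finset.mem_univ i), Finset.card_univ, Fintype.card_fin]
        omega
      obtain ⟨k, hkmem, hk⟩ := Finset.exists_min_image s2 (fun t => D t.succ) hs2ne
      set s3 := s2.erase k with hs3def
      have hji : j ≠ i := (Finset.mem_erase.mp hjmem).1
      have hkj : k ≠ j := (Finset.mem_erase.mp hkmem).1
      have hki : k ≠ i := (Finset.mem_erase.mp (Finset.mem_of_mem_erase hkmem)).1
      have hab : D i.succ ≤ D j.succ := hi j (Finset.mem_univ j)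
      have hbc : D j.succ ≤ D k.succ := hj k (Finset.mem_of_mem_erase hkmem)
      have hrest : ∀ t ∈ s3, D k.succ ≤ D t.succ := fun t ht =>
        hk t (Finset.mem_of_mem_erase ht)
      obtain ⟨hsum, hsq⟩ := ruling_coords hD
      have e1 : D i.succ + ∑ t ∈ s1, D t.succ = ∑ t : Fin r, D t.succ :=
        Finset.add_sum_erase _ (fun t => D t.succ) (Finset.mem_univ i)
      have e2 : D j.succ + ∑ t ∈ s2, D t.succ = ∑ t ∈ s1, D t.succ :=
        Finset.add_sum_erase _ (fun t => D t.succ) hjmem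
      have e3 : D k.succ + ∑ t ∈ s3, D t.succ = ∑ t ∈ s2, D t.succ :=
        Finset.add_sum_erase _ (fun t => D t.succ) hkmem
      have f1 : (D i.succ)^2 + ∑ t ∈ s1, (D t.succ)^2 = ∑ t : Fin r, (D t.succ)^2 :=
        Finset.add_sum_erase _ (fun t => (D t.succ)^2) (Finset.mem_univ i)
      have f2 : (D j.succ)^2 + ∑ t ∈ s2, (D t.succ)^2 = ∑ t ∈ s1, (D t.succ)^2 :=
        Finset.add_sum_erase _ (fun t => (D t.succ)^2) hjmem
      have f3 : (D k.succ)^2 + ∑ t ∈ s3, (D t.succ)^2 = ∑ t ∈ s2, (D t.succ)^2 :=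
        Finset.add_sum_erase _ (fun t => (D t.succ)^2) hkmem
      set U := ∑ t ∈ s3, D t.succ with hUdef
      set Q := ∑ t ∈ s3, (D t.succ)^2 with hQdef
      have hnonpos := ruling_coord_nonpos h2 hD
      have hUnp : U ≤ 0 := Finset.sum_nonpos fun t _ => hnonpos t
      have hQ0 : 0 ≤ Q := Finset.sum_nonneg fun t _ => sq_nonneg _
      have hQle : Q ≤ D k.succ * U := by
        rw [hQdef, hUdef, Finset.mul_sum]
        refine Finset.sum_le_sum fun t ht => ?_
        have h1t := hrest t ht
        have h2t := hnonpos t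
        nlinarith
      have hcard3 : (s3.card : ℤ) ≤ 5 := by
        rw [hs3def, Finset.card_erase_of_mem hkmem, hs2def,
          Finset.card_erase_of_mem hjmem, hs1def,
          Finset.card_erase_of_mem (Finset.mem_univ i), Finset.card_univ, Fintype.card_fin]
        omega
      have hCS : U^2 ≤ 5 * Q := by
        have := sq_sum_le_card_mul_sum_sq (s := s3) (f := fun t => D t.succ)
        rw [← hUdef, ← hQdef] at this
        nlinarith
      have hneg : D 0 + D i.succ + D j.succ + D k.succ ≤ -1 := by
        by_contra hcon
        push_neg at hcon
        have hS' : (-D i.succ) + (-D j.succ) + (-D k.succ) ≤ D 0 := by omega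
        have harg1 : (-D i.succ) + (-D j.succ) + (-D k.succ) + (-U) = 3 * D 0 - 2 := by
          linarith
        have harg2 : (-D i.succ)^2 + (-D j.succ)^2 + (-D k.succ)^2 + Q = (D 0)^2 := by
          have g1 : (-D i.succ)^2 = (D i.succ)^2 := by ring
          have g2 : (-D j.succ)^2 = (D j.succ)^2 := by ring
          have g3 : (-D k.succ)^2 = (D k.succ)^2 := by ring
          rw [g1, g2, g3]; linarith
        have harg3 : Q ≤ (-D k.succ) * (-U) := by
          have : (-D k.succ) * (-U) = D k.succ * U := by ring
          rw [this]; exact hQle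
        have harg4 : (-U)^2 ≤ 5 * Q := by
          have : (-U)^2 = U^2 := by ring
          rw [this]; exact hCS
        exact keylemma (-D i.succ) (-D j.succ) (-D k.succ) (D 0) Q (-U) hd2
          (by linarith) (by linarith) (by linarith [hnonpos k]) hS'
          harg1 harg2 hQ0 harg3 (by linarith) harg4
      set α : Fin (r+1) → ℤ := l 0 - l i.succ - l j.succ - l k.succ with hαdef
      have hα0 : α 0 = 1 := three_eval0 i j k
      have hroot : IsRoot α := root_three (Ne.symm hji) (Ne.symm hki) (Ne.symm hkj)
      have hDα : dpB D α = D 0 + D i.succ + D j.succ + D k.succ := by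
        rw [hαdef]; exact dpB_three D i j k
      set D' := reflct α D with hD'def
      have hD' : IsRuling D' := reflct_ruling hroot hD
      have hD'0 : D' 0 = D 0 + dpB D α := by
        rw [hD'def]
        show D 0 + dpB D α * α 0 = D 0 + dpB D α
        rw [hα0, mul_one]
      have hD'pos : 1 ≤ D' 0 := ruling_pos h2 hD'
      have hlt : (D' 0).toNat < n := by omega
      obtain ⟨E', F', hE', hF', hEF', hDEF⟩ := ih (D' 0).toNat hlt D' hD' (by omega)
      refine ⟨reflct α E', reflct α F', reflct_exc hroot hE', reflct_exc hroot hF', ?_, ?_⟩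
      · rw [dpB_reflct_reflct hroot.1, hEF']
      · have : D = reflct α D' := (reflct_reflct hroot.1 D).symm
        rw [this, hDEF, reflct_add]

end Aux

/-- `D` is a ruling iff `D = E + F` with `E, F` exceptional and `(E,F) = 1`. -/
theorem stmt9 (r : ℕ) (h1 : 4 ≤ r) (h2 : r ≤ 8) (D : Fin (r + 1) → ℤ) :
    IsRuling D ↔
      ∃ E F : Fin (r + 1) → ℤ, IsExc E ∧ IsExc F ∧ dpB E F = 1 ∧ D = E + F := by
  constructor
  · intro hD
    have hpos : 1 ≤ D 0 := ruling_pos h2 hD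
    exact decomp_aux h1 h2 (D 0).toNat D hD (by omega)
  · rintro ⟨E, F, hE, hF, hEF, rfl⟩
    constructor
    · rw [dpB_add_left, dpB_add_right, dpB_add_right, hE.1, hF.1, hEF, dpB_comm F E, hEF]
      ring
    · rw [dpB_add_left, hE.2, hF.2]
      norm_num
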